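/- For each i ∈ {0,1,2}: (a) no unary polynomial F of B(T) satisfies F(0) = P_i and F(P_i) = 0; and (b) there is no binary polynomial F of B(T) and element v ≠ 0 with F(0,0) = 0 and F(P_i,0) = F(0,P_i) = F(P_i,P_i) = v. (The pairs {0,P_i} carry only a type-5 semilattice polynomial structure.) -/
import Mathlib


namespace Paper

/-- Direction of a Turing-machine head move. -/
inductive Dir : Type
  | L | R
deriving DecidableEq

/-- A Turing machine with states μ₀, μ₁, …, μ_k (μ₀ the halting state): for each state
μ_i with 1 ≤ i ≤ k and each tape symbol r, exactly one instruction μ_i r s D μ_m,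
recorded as `instr i r = (s, D, m)`.  (The value of `instr` at `i = 0` is irrelevant:
no instruction begins with μ₀.) -/
structure TM (k : ℕ) : Type where
  instr : Fin (k + 1) → Bool → Bool × Dir × Fin (k + 1)

/-- The universe of the algebra B(T):
`zero` = 0, `P j` = P_j, `one`,`two`,`H` the sequential elements U, and the machine
elements `C b i r s` = C_{ir}^s, `D b i r s` = D_{ir}^s, `M b i r` = M_i^r, where
`b = true` marks the barred copy V̄. -/
inductive BT (k : ℕ) : Type
  | zero : BT k
  | P : Fin 3 → BT k
  | one : BT k
  | two : BT k
  | H : BT k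
  | C : Bool → Fin (k + 1) → Bool → Bool → BT k
  | D : Bool → Fin (k + 1) → Bool → Bool → BT k
  | M : Bool → Fin (k + 1) → Bool → BT k
deriving DecidableEq

namespace BT

variable {k : ℕ}

/-- The partial order of B(T): x ≤ y iff x = 0, or x = y, or (x = P₂ and y ∈ {P₀,P₁}). -/
def le (x y : BT k) : Prop :=
  x = zero ∨ x = y ∨ (x = P 2 ∧ (y = P 0 ∨ y = P 1))

/-- x ∧ y: the greatest lower bound for `le`. -/
def meet (x y : BT k) : BT k :=
  if x = y then x
  else if x = P 2 ∧ (y = P 0 ∨ y = P 1) then P 2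
  else if y = P 2 ∧ (x = P 0 ∨ x = P 1) then P 2
  else if (x = P 0 ∨ x = P 1) ∧ (y = P 0 ∨ y = P 1) then P 2
  else zero

/-- membership in P = {P₀,P₁,P₂} -/
def isP : BT k → Bool
  | P _ => true
  | _ => false

/-- membership in U = {1,2,H} -/
def isU : BT k → Bool
  | one => true
  | two => true
  | H => true
  | _ => false

/-- membership in V ∪ V̄ -/
def isVV : BT k → Bool
  | C _ _ _ _ => true
  | D _ _ _ _ => true
  | M _ _ _ => true
  | _ => false

/-- membership in U ∪ V ∪ V̄ -/
def isUVV (x : BT k) : Bool := isU x || isVV x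

/-- membership in V₀ = {C_{0r}^s, D_{0r}^s, M₀^r} (unbarred, state μ₀) -/
def isV0 : BT k → Bool
  | C false i _ _ => i == 0
  | D false i _ _ => i == 0
  | M false i _ => i == 0
  | _ => false

/-- membership in V₁₀⁰ = {C₁₀⁰, M₁⁰, D₁₀⁰} -/
def isV10 (x : BT k) : Bool :=
  x == C false 1 false false || x == M false 1 false || x == D false 1 false false

/-- the bar involution on V ∪ V̄ (identity elsewhere) -/
def barOp : BT k → BT k
  | C b i r s => C (!b) i r s
  | D b i r s => D (!b) i r s
  | M b i r => M (!b) i r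
  | x => x

/-- s₀ = C₁₀⁰, s₁ = M₁⁰, s₂ = D₁₀⁰ -/
def sel : Fin 3 → BT k := ![C false 1 false false, M false 1 false, D false 1 false false]

/-- x ∧ⁱ y = x if x = y ∈ (P ∪ V₁₀⁰) \ {s_i}, else 0. -/
def meetI (i : Fin 3) (x y : BT k) : BT k :=
  if x = y ∧ (isP x ∨ isV10 x) ∧ x ≠ sel i then x else zero

/-- T₀(x) = P₂ if x ∈ {P₀,P₂}; P₀ if x = P₁; x if x ∈ V₀; else 0. -/
def T0 : BT k → BT k
  | P j => if j = 1 then P 0 else P 2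
  | C false i r s => if i = 0 then C false i r s else zero
  | D false i r s => if i = 0 then D false i r s else zero
  | M false i r => if i = 0 then M false i r else zero
  | _ => zero

/-- T₁(x,y). -/
def T1 (x y : BT k) : BT k :=
  if (x = P 0 ∧ y = P 0) ∨ (x = P 0 ∧ y = P 1) ∨ (x = P 1 ∧ y = P 0) ∨
     (x = P 0 ∧ y = P 2) ∨ (x = P 2 ∧ y = P 0) then P 1
  else if (x = P 1 ∨ x = P 2) ∧ (y = P 1 ∨ y = P 2) then P 2
  else if x = y ∧ isV10 x then x
  else zero

/-- J′(x,y,z) = x ∧ z if x = y or {x,y} ⊆ P; x if x = ȳ ∈ V ∪ V̄; else 0. -/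
def J' (x y z : BT k) : BT k :=
  if x = y ∨ (isP x ∧ isP y) then meet x z
  else if isVV y ∧ x = barOp y then x
  else zero

/-- the ternary discriminator: t(x,y,z) = z if x = y, else x. -/
def disc (x y z : BT k) : BT k := if x = y then z else x

/-- S₁(u,x,y,z). -/
def S1 (u x y z : BT k) : BT k :=
  if (u = one ∨ u = two) ∧ x = y ∧ y = z ∧ isUVV x then x
  else if isP x ∧ isP y ∧ isP z then disc x y z
  else zero

/-- S₂(u,v,x,y,z). -/
def S2 (u v x y z : BT k) : BT k :=
  if isVV v ∧ u = barOp v ∧ x = y ∧ y = z ∧ isVV x then x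
  else if isP x ∧ isP y ∧ isP z then disc x y z
  else zero

/-- L_{irt} for the instruction μ_i r s L μ_m (the barred clause is handled by carrying
the bar `b` of the argument through). -/
def Lop (i : Fin (k + 1)) (r s : Bool) (m : Fin (k + 1)) (t : Bool) :
    BT k → BT k → BT k → BT k := fun x y u =>
  match u with
  | P j => if x = one ∧ y = one then P j else zero
  | C b i' r' s' =>
      if x = one ∧ y = one ∧ i' = i ∧ r' = r then C b m t s'
      else if x = H ∧ y = one ∧ i' = i ∧ r' = r ∧ s' = t then M b m t
      else zero
  | M b i' r' => if x = two ∧ y = H ∧ i' = i ∧ r' = r then D b m t s else zero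
  | D b i' r' s' => if x = two ∧ y = two ∧ i' = i ∧ r' = r then D b m t s' else zero
  | _ => zero

/-- R_{irt} for the instruction μ_i r s R μ_m. -/
def Rop (i : Fin (k + 1)) (r s : Bool) (m : Fin (k + 1)) (t : Bool) :
    BT k → BT k → BT k → BT k := fun x y u =>
  match u with
  | P j => if x = one ∧ y = one then P j else zero
  | C b i' r' s' => if x = one ∧ y = one ∧ i' = i ∧ r' = r then C b m t s' else zero
  | M b i' r' => if x = H ∧ y = one ∧ i' = i ∧ r' = r then C b m t s else zero
  | D b i' r' s' =>
      if x = two ∧ y = H ∧ i' = i ∧ r' = r ∧ s' = t then M b m t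
      else if x = two ∧ y = two ∧ i' = i ∧ r' = r then D b m t s'
      else zero
  | _ => zero

end BT

/-- The forward machine operation determined by the unique instruction of T beginning
with μ_i r (for 1 ≤ i ≤ k) and the symbol t. -/
def fwd {k : ℕ} (T : TM k) (i : Fin (k + 1)) (r t : Bool) :
    BT k → BT k → BT k → BT k :=
  match T.instr i r with
  | (s, Dir.L, m) => BT.Lop i r s m t
  | (s, Dir.R, m) => BT.Rop i r s m t

/-- the reverse of a machine operation: F°(x,y,u) = v when F(x,y,v) = u ≠ 0, else 0. -/
noncomputable def revOp {k : ℕ} (F : BT k → BT k → BT k → BT k) (x y u : BT k) : BT k :=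
  haveI := Classical.propDecidable (u ≠ BT.zero ∧ ∃ v, F x y v = u)
  if h : u ≠ BT.zero ∧ ∃ v, F x y v = u then h.2.choose else BT.zero

/-- The machine operations ℳ: `b = false` gives the forward operation, `b = true` the
reverse operation. -/
noncomputable def mop {k : ℕ} (T : TM k) (i : Fin (k + 1)) (r t : Bool) (b : Bool) :
    BT k → BT k → BT k → BT k :=
  match b with
  | false => fwd T i r t
  | true => revOp (fwd T i r t)

/-- The relation ≺ on U: 2≺2, 2≺H, H≺1, 1≺1. -/
def prec {k : ℕ} : BT k → BT k → Bool
  | BT.two, BT.two => true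
  | BT.two, BT.H => true
  | BT.H, BT.one => true
  | BT.one, BT.one => true
  | _, _ => false

/-- U_i¹ built from the machine operation F. -/
def U1op {k : ℕ} (F : BT k → BT k → BT k → BT k) (x y z u : BT k) : BT k :=
  if prec x y ∧ prec x z ∧ y ≠ z ∧ BT.isVV (F x y u) then BT.barOp (F x y u)
  else if prec x y ∧ y = z then F x y u
  else BT.zero

/-- U_i² built from the machine operation F. -/
def U2op {k : ℕ} (F : BT k → BT k → BT k → BT k) (x y z u : BT k) : BT k :=
  if prec x z ∧ prec y z ∧ x ≠ y ∧ BT.isVV (F y z u) then BT.barOp (F y z u)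
  else if x = y ∧ prec y z then F y z u
  else BT.zero

/-- The n-ary polynomials of the algebra B(T): functions obtained by composing the basic
operations (the constant 0, T₀, T₁, ∧, ∧⁰, ∧¹, ∧², J′, S₁, S₂, the forward and reverse
machine operations, and the U_i¹, U_i²), coordinate projections and constants. -/
inductive PolyB {k : ℕ} (T : TM k) : {n : ℕ} → ((Fin n → BT k) → BT k) → Prop where
  | proj {n : ℕ} (i : Fin n) : PolyB T fun v => v i
  | const {n : ℕ} (c : BT k) : PolyB T fun _ : Fin n → BT k => c
  | t0 {n : ℕ} {p : (Fin n → BT k) → BT k} :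
      PolyB T p → PolyB T fun v => BT.T0 (p v)
  | t1 {n : ℕ} {p q : (Fin n → BT k) → BT k} :
      PolyB T p → PolyB T q → PolyB T fun v => BT.T1 (p v) (q v)
  | meet {n : ℕ} {p q : (Fin n → BT k) → BT k} :
      PolyB T p → PolyB T q → PolyB T fun v => BT.meet (p v) (q v)
  | meetI (j : Fin 3) {n : ℕ} {p q : (Fin n → BT k) → BT k} :
      PolyB T p → PolyB T q → PolyB T fun v => BT.meetI j (p v) (q v)
  | jop {n : ℕ} {p q r : (Fin n → BT k) → BT k} :
      PolyB T p → PolyB T q → PolyB T r → PolyB T fun v => BT.J' (p v) (q v) (r v)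
  | s1 {n : ℕ} {p q r s : (Fin n → BT k) → BT k} :
      PolyB T p → PolyB T q → PolyB T r → PolyB T s →
      PolyB T fun v => BT.S1 (p v) (q v) (r v) (s v)
  | s2 {n : ℕ} {p q r s w : (Fin n → BT k) → BT k} :
      PolyB T p → PolyB T q → PolyB T r → PolyB T s → PolyB T w →
      PolyB T fun v => BT.S2 (p v) (q v) (r v) (s v) (w v)
  | mach (i : Fin (k + 1)) (hi : i ≠ 0) (r t b : Bool) {n : ℕ}
      {p q u : (Fin n → BT k) → BT k} :
      PolyB T p → PolyB T q → PolyB T u →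
      PolyB T fun v => mop T i r t b (p v) (q v) (u v)
  | u1 (i : Fin (k + 1)) (hi : i ≠ 0) (r t b : Bool) {n : ℕ}
      {p q r' s : (Fin n → BT k) → BT k} :
      PolyB T p → PolyB T q → PolyB T r' → PolyB T s →
      PolyB T fun v => U1op (mop T i r t b) (p v) (q v) (r' v) (s v)
  | u2 (i : Fin (k + 1)) (hi : i ≠ 0) (r t b : Bool) {n : ℕ}
      {p q r' s : (Fin n → BT k) → BT k} :
      PolyB T p → PolyB T q → PolyB T r' → PolyB T s →
      PolyB T fun v => U2op (mop T i r t b) (p v) (q v) (r' v) (s v)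

/-- unary polynomials of B(T) -/
def UPolyB {k : ℕ} (T : TM k) (F : BT k → BT k) : Prop :=
  PolyB T (n := 1) fun v => F (v 0)

/-- binary polynomials of B(T) -/
def BPolyB {k : ℕ} (T : TM k) (F : BT k → BT k → BT k) : Prop :=
  PolyB T (n := 2) fun v => F (v 0) (v 1)


/-! ### Auxiliary lemmas for Statement 8 -/

section Aux

namespace BT

variable {k : ℕ}

@[simp] lemma isP_zero : isP (zero : BT k) = false := rfl
@[simp] lemma isU_zero : isU (zero : BT k) = false := rfl
@[simp] lemma isVV_zero : isVV (zero : BT k) = false := rfl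
@[simp] lemma isUVV_zero : isUVV (zero : BT k) = false := rfl
@[simp] lemma isV10_zero : isV10 (zero : BT k) = false := by simp [isV10]

@[simp] lemma T0_zero : T0 (zero : BT k) = zero := rfl

@[simp] lemma meet_zero_left (y : BT k) : meet zero y = zero := by
  unfold meet; split_ifs <;> simp_all

@[simp] lemma meet_zero_right (x : BT k) : meet x zero = zero := by
  unfold meet; split_ifs <;> simp_all

@[simp] lemma T1_zero_left (y : BT k) : T1 zero y = zero := by
  unfold T1; split_ifs <;> simp_all

@[simp] lemma T1_zero_right (x : BT k) : T1 x zero = zero := by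
  unfold T1; split_ifs <;> simp_all

@[simp] lemma meetI_zero_left (i : Fin 3) (y : BT k) : meetI i zero y = zero := by
  unfold meetI; split_ifs <;> simp_all

@[simp] lemma meetI_zero_right (i : Fin 3) (x : BT k) : meetI i x zero = zero := by
  unfold meetI; split_ifs <;> simp_all

lemma barOp_isVV_ne_zero {y : BT k} (h : isVV y = true) : zero ≠ barOp y := by
  cases y <;> simp_all [isVV, barOp]

@[simp] lemma J'_zero_left (y z : BT k) : J' zero y z = zero := by
  unfold J'
  split_ifs with h1 h2
  · rcases h1 with rfl | h1
    · exact meet_zero_left z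
    · simp at h1
  · exact absurd h2.2 (barOp_isVV_ne_zero h2.1)
  · rfl

@[simp] lemma J'_zero_mid (x z : BT k) : J' x zero z = zero := by
  unfold J'
  split_ifs with h1 h2
  · rcases h1 with rfl | h1
    · exact meet_zero_left z
    · simp at h1
  · simp at h2
  · rfl

@[simp] lemma S1_zero_x (u y z : BT k) : S1 u zero y z = zero := by
  unfold S1; split_ifs <;> simp_all

@[simp] lemma S1_zero_y (u x z : BT k) : S1 u x zero z = zero := by
  unfold S1; split_ifs <;> simp_all

@[simp] lemma S1_zero_z (u x y : BT k) : S1 u x y zero = zero := by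
  unfold S1; split_ifs <;> simp_all

lemma isP_not_isUVV {x : BT k} (h : isP x = true) : isUVV x = false := by
  cases x <;> simp_all [isP, isUVV, isU, isVV]

lemma isP_not_isVV {x : BT k} (h : isP x = true) : isVV x = false := by
  cases x <;> simp_all [isP, isVV]

lemma S1_isP {x y z : BT k} (hP : isP x = true ∧ isP y = true ∧ isP z = true) (u : BT k) :
    S1 u x y z = disc x y z := by
  unfold S1
  rw [if_neg, if_pos hP]
  rintro ⟨-, -, -, h⟩
  rw [isP_not_isUVV hP.1] at h
  exact absurd h (by simp)

lemma S1_zero_u {x y z : BT k} (hP : ¬(isP x = true ∧ isP y = true ∧ isP z = true)) :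
    S1 zero x y z = zero := by
  unfold S1
  rw [if_neg, if_neg hP]
  rintro ⟨h, -⟩
  rcases h with h | h <;> simp at h

@[simp] lemma S2_zero_x (u v y z : BT k) : S2 u v zero y z = zero := by
  unfold S2; split_ifs <;> simp_all

@[simp] lemma S2_zero_y (u v x z : BT k) : S2 u v x zero z = zero := by
  unfold S2; split_ifs <;> simp_all

@[simp] lemma S2_zero_z (u v x y : BT k) : S2 u v x y zero = zero := by
  unfold S2; split_ifs <;> simp_all

lemma S2_isP {x y z : BT k} (hP : isP x = true ∧ isP y = true ∧ isP z = true) (u v : BT k) :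
    S2 u v x y z = disc x y z := by
  unfold S2
  rw [if_neg, if_pos hP]
  rintro ⟨-, -, -, -, h⟩
  rw [isP_not_isVV hP.1] at h
  exact absurd h (by simp)

lemma S2_zero_uv {x y z u v : BT k}
    (hP : ¬(isP x = true ∧ isP y = true ∧ isP z = true))
    (h : u = zero ∨ v = zero) : S2 u v x y z = zero := by
  unfold S2
  rw [if_neg, if_neg hP]
  rintro ⟨hv, hu, -⟩
  rcases h with rfl | rfl
  · exact absurd hu (barOp_isVV_ne_zero hv)
  · simp at hv

@[simp] lemma Lop_zero_x (i : Fin (k + 1)) (r s : Bool) (m : Fin (k + 1)) (t : Bool)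
    (y u : BT k) : Lop i r s m t zero y u = zero := by
  cases u <;> simp [Lop]

@[simp] lemma Lop_zero_y (i : Fin (k + 1)) (r s : Bool) (m : Fin (k + 1)) (t : Bool)
    (x u : BT k) : Lop i r s m t x zero u = zero := by
  cases u <;> simp [Lop]

@[simp] lemma Lop_zero_u (i : Fin (k + 1)) (r s : Bool) (m : Fin (k + 1)) (t : Bool)
    (x y : BT k) : Lop i r s m t x y zero = zero := rfl

@[simp] lemma Rop_zero_x (i : Fin (k + 1)) (r s : Bool) (m : Fin (k + 1)) (t : Bool)
    (y u : BT k) : Rop i r s m t zero y u = zero := by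
  cases u <;> simp [Rop]

@[simp] lemma Rop_zero_y (i : Fin (k + 1)) (r s : Bool) (m : Fin (k + 1)) (t : Bool)
    (x u : BT k) : Rop i r s m t x zero u = zero := by
  cases u <;> simp [Rop]

@[simp] lemma Rop_zero_u (i : Fin (k + 1)) (r s : Bool) (m : Fin (k + 1)) (t : Bool)
    (x y : BT k) : Rop i r s m t x y zero = zero := rfl

@[simp] lemma prec_zero_left (y : BT k) : prec zero y = false := by cases y <;> rfl

@[simp] lemma prec_zero_right (x : BT k) : prec x zero = false := by cases x <;> rfl

end BT

variable {k : ℕ}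

@[simp] lemma fwd_zero_x (T : TM k) (i : Fin (k + 1)) (r t : Bool) (y u : BT k) :
    fwd T i r t BT.zero y u = BT.zero := by
  unfold fwd
  rcases T.instr i r with ⟨s, D, m⟩
  cases D <;> simp

@[simp] lemma fwd_zero_y (T : TM k) (i : Fin (k + 1)) (r t : Bool) (x u : BT k) :
    fwd T i r t x BT.zero u = BT.zero := by
  unfold fwd
  rcases T.instr i r with ⟨s, D, m⟩
  cases D <;> simp

@[simp] lemma fwd_zero_u (T : TM k) (i : Fin (k + 1)) (r t : Bool) (x y : BT k) :
    fwd T i r t x y BT.zero = BT.zero := by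
  unfold fwd
  rcases T.instr i r with ⟨s, D, m⟩
  cases D <;> simp

lemma revOp_zero_of {F : BT k → BT k → BT k → BT k} {x y : BT k}
    (h : ∀ v, F x y v = BT.zero) (u : BT k) : revOp F x y u = BT.zero := by
  unfold revOp
  split
  · next hc => exact (hc.1 (hc.2.choose_spec.symm.trans (h _))).elim
  · rfl

@[simp] lemma revOp_zero_u (F : BT k → BT k → BT k → BT k) (x y : BT k) :
    revOp F x y BT.zero = BT.zero := by
  unfold revOp
  split
  · next hc => exact (hc.1 rfl).elim
  · rfl

@[simp] lemma mop_zero_x (T : TM k) (i : Fin (k + 1)) (r t b : Bool) (y u : BT k) :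
    mop T i r t b BT.zero y u = BT.zero := by
  cases b
  · exact fwd_zero_x T i r t y u
  · exact revOp_zero_of (fun v => fwd_zero_x T i r t y v) u

@[simp] lemma mop_zero_y (T : TM k) (i : Fin (k + 1)) (r t b : Bool) (x u : BT k) :
    mop T i r t b x BT.zero u = BT.zero := by
  cases b
  · exact fwd_zero_y T i r t x u
  · exact revOp_zero_of (fun v => fwd_zero_y T i r t x v) u

@[simp] lemma mop_zero_u (T : TM k) (i : Fin (k + 1)) (r t b : Bool) (x y : BT k) :
    mop T i r t b x y BT.zero = BT.zero := by
  cases b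
  · exact fwd_zero_u T i r t x y
  · exact revOp_zero_u _ x y

@[simp] lemma U1op_zero_x (F : BT k → BT k → BT k → BT k) (y z u : BT k) :
    U1op F BT.zero y z u = BT.zero := by
  simp [U1op]

@[simp] lemma U1op_zero_y (F : BT k → BT k → BT k → BT k) (x z u : BT k) :
    U1op F x BT.zero z u = BT.zero := by
  simp [U1op]

@[simp] lemma U1op_zero_z (F : BT k → BT k → BT k → BT k) (x y u : BT k) :
    U1op F x y BT.zero u = BT.zero := by
  unfold U1op
  split_ifs with h1 h2
  · simp at h1
  · obtain ⟨h2a, rfl⟩ := h2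
    simp at h2a
  · rfl

lemma U1op_zero_u {F : BT k → BT k → BT k → BT k} (x y z : BT k)
    (hF : ∀ x' y', F x' y' BT.zero = BT.zero) : U1op F x y z BT.zero = BT.zero := by
  unfold U1op
  rw [hF x y]
  split_ifs <;> simp_all

@[simp] lemma U2op_zero_x (F : BT k → BT k → BT k → BT k) (y z u : BT k) :
    U2op F BT.zero y z u = BT.zero := by
  unfold U2op
  split_ifs with h1 h2
  · simp at h1
  · obtain ⟨rfl, h2b⟩ := h2
    simp at h2b
  · rfl

@[simp] lemma U2op_zero_y (F : BT k → BT k → BT k → BT k) (x z u : BT k) :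
    U2op F x BT.zero z u = BT.zero := by
  simp [U2op]

@[simp] lemma U2op_zero_z (F : BT k → BT k → BT k → BT k) (x y u : BT k) :
    U2op F x y BT.zero u = BT.zero := by
  simp [U2op]

lemma U2op_zero_u {F : BT k → BT k → BT k → BT k} (x y z : BT k)
    (hF : ∀ x' y', F x' y' BT.zero = BT.zero) : U2op F x y z BT.zero = BT.zero := by
  unfold U2op
  rw [hF y z]
  split_ifs <;> simp_all

@[simp] lemma U1op_mop_zero_u (T : TM k) (i : Fin (k + 1)) (r t b : Bool) (x y z : BT k) :
    U1op (mop T i r t b) x y z BT.zero = BT.zero :=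
  U1op_zero_u x y z (fun x' y' => mop_zero_u T i r t b x' y')

@[simp] lemma U2op_mop_zero_u (T : TM k) (i : Fin (k + 1)) (r t b : Bool) (x y z : BT k) :
    U2op (mop T i r t b) x y z BT.zero = BT.zero :=
  U2op_zero_u x y z (fun x' y' => mop_zero_u T i r t b x' y')

/-- `covers g ε`: the set of coordinates marked by `g` is contained in those marked by `ε`. -/
def covers {n : ℕ} (g ε : Fin n → Bool) : Prop := ∀ i, g i = true → ε i = true

instance {n : ℕ} (g ε : Fin n → Bool) : Decidable (covers g ε) :=
  inferInstanceAs (Decidable (∀ i, g i = true → ε i = true))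

lemma covers_or {n : ℕ} (g h ε : Fin n → Bool) :
    covers (fun i => g i || h i) ε ↔ covers g ε ∧ covers h ε := by
  simp [covers, Bool.or_eq_true, or_imp, forall_and]

/-- The key invariant: every polynomial of B(T), restricted to tuples over {0, P j},
acts like a (possibly empty) meet of a set of coordinates, scaled by a constant. -/
def Good {k n : ℕ} (j : Fin 3) (p : (Fin n → BT k) → BT k) : Prop :=
  ∃ (c : BT k) (g : Fin n → Bool), ∀ ε : Fin n → Bool,
    p (fun i => if ε i = true then BT.P j else BT.zero) =
      if covers g ε then c else BT.zero

theorem good_of_poly {k n : ℕ} {T : TM k} (j : Fin 3) {p : (Fin n → BT k) → BT k}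
    (hp : PolyB T p) : Good j p := by
  induction hp with
  | proj i =>
      refine ⟨BT.P j, fun i' => decide (i' = i), fun ε => ?_⟩
      show (if ε i = true then BT.P j else BT.zero) = _
      by_cases h : ε i = true
      · rw [if_pos h, if_pos]
        intro i' hi'
        rw [decide_eq_true_iff] at hi'
        subst hi'; exact h
      · rw [if_neg h, if_neg]
        intro hc
        exact h (hc i (by simp))
  | const c =>
      refine ⟨c, fun _ => false, fun ε => ?_⟩
      rw [if_pos]
      intro i hi
      simp at hi
  | t0 hp ih =>
      obtain ⟨c, g, hg⟩ := ih
      refine ⟨BT.T0 c, g, fun ε => ?_⟩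
      simp only [hg ε]
      split_ifs <;> simp
  | t1 hp hq ihp ihq =>
      obtain ⟨c, g1, h1⟩ := ihp; obtain ⟨d, g2, h2⟩ := ihq
      refine ⟨BT.T1 c d, fun i => g1 i || g2 i, fun ε => ?_⟩
      simp only [h1 ε, h2 ε]
      by_cases a1 : covers g1 ε <;> by_cases a2 : covers g2 ε <;>
        simp [covers_or, a1, a2]
  | meet hp hq ihp ihq =>
      obtain ⟨c, g1, h1⟩ := ihp; obtain ⟨d, g2, h2⟩ := ihq
      refine ⟨BT.meet c d, fun i => g1 i || g2 i, fun ε => ?_⟩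
      simp only [h1 ε, h2 ε]
      by_cases a1 : covers g1 ε <;> by_cases a2 : covers g2 ε <;>
        simp [covers_or, a1, a2]
  | meetI j' hp hq ihp ihq =>
      obtain ⟨c, g1, h1⟩ := ihp; obtain ⟨d, g2, h2⟩ := ihq
      refine ⟨BT.meetI j' c d, fun i => g1 i || g2 i, fun ε => ?_⟩
      simp only [h1 ε, h2 ε]
      by_cases a1 : covers g1 ε <;> by_cases a2 : covers g2 ε <;>
        simp [covers_or, a1, a2]
  | jop hp hq hr ihp ihq ihr =>
      obtain ⟨c, g1, h1⟩ := ihp; obtain ⟨d, g2, h2⟩ := ihq; obtain ⟨e, g3, h3⟩ := ihr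
      by_cases hcd : c = d ∨ (BT.isP c = true ∧ BT.isP d = true)
      · refine ⟨BT.meet c e, fun i => g1 i || g2 i || g3 i, fun ε => ?_⟩
        simp only [h1 ε, h2 ε, h3 ε]
        have hJ : ∀ z, BT.J' c d z = BT.meet c z := by
          intro z; unfold BT.J'; rw [if_pos hcd]
        by_cases a1 : covers g1 ε <;> by_cases a2 : covers g2 ε <;>
          by_cases a3 : covers g3 ε <;>
          simp [covers_or, a1, a2, a3, hJ]
      · by_cases hbar : BT.isVV d = true ∧ c = BT.barOp d
        · refine ⟨c, fun i => g1 i || g2 i, fun ε => ?_⟩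
          simp only [h1 ε, h2 ε, h3 ε]
          have hJ : ∀ z, BT.J' c d z = c := by
            intro z; unfold BT.J'; rw [if_neg hcd, if_pos hbar]
          by_cases a1 : covers g1 ε <;> by_cases a2 : covers g2 ε <;>
            by_cases a3 : covers g3 ε <;>
            simp [covers_or, a1, a2, a3, hJ]
        · refine ⟨BT.zero, fun _ => false, fun ε => ?_⟩
          simp only [h1 ε, h2 ε, h3 ε]
          have hJ : ∀ z, BT.J' c d z = BT.zero := by
            intro z; unfold BT.J'; rw [if_neg hcd, if_neg hbar]
          by_cases a1 : covers g1 ε <;> by_cases a2 : covers g2 ε <;>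
            by_cases a3 : covers g3 ε <;>
            simp [a1, a2, a3, hJ]
  | s1 hp hq hr hs ihp ihq ihr ihs =>
      obtain ⟨c1, g1, h1⟩ := ihp; obtain ⟨c2, g2, h2⟩ := ihq
      obtain ⟨c3, g3, h3⟩ := ihr; obtain ⟨c4, g4, h4⟩ := ihs
      by_cases hP : BT.isP c2 = true ∧ BT.isP c3 = true ∧ BT.isP c4 = true
      · refine ⟨BT.disc c2 c3 c4, fun i => g2 i || g3 i || g4 i, fun ε => ?_⟩
        simp only [h1 ε, h2 ε, h3 ε, h4 ε]
        by_cases a1 : covers g1 ε <;> by_cases a2 : covers g2 ε <;>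
          by_cases a3 : covers g3 ε <;> by_cases a4 : covers g4 ε <;>
          simp [covers_or, a1, a2, a3, a4, BT.S1_isP hP]
      · refine ⟨BT.S1 c1 c2 c3 c4, fun i => g1 i || g2 i || g3 i || g4 i, fun ε => ?_⟩
        simp only [h1 ε, h2 ε, h3 ε, h4 ε]
        by_cases a1 : covers g1 ε <;> by_cases a2 : covers g2 ε <;>
          by_cases a3 : covers g3 ε <;> by_cases a4 : covers g4 ε <;>
          simp [covers_or, a1, a2, a3, a4, BT.S1_zero_u hP]
  | s2 hp hq hr hs hw ihp ihq ihr ihs ihw =>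
      obtain ⟨c1, g1, h1⟩ := ihp; obtain ⟨c2, g2, h2⟩ := ihq
      obtain ⟨c3, g3, h3⟩ := ihr; obtain ⟨c4, g4, h4⟩ := ihs
      obtain ⟨c5, g5, h5⟩ := ihw
      by_cases hP : BT.isP c3 = true ∧ BT.isP c4 = true ∧ BT.isP c5 = true
      · refine ⟨BT.disc c3 c4 c5, fun i => g3 i || g4 i || g5 i, fun ε => ?_⟩
        simp only [h1 ε, h2 ε, h3 ε, h4 ε, h5 ε]
        by_cases a1 : covers g1 ε <;> by_cases a2 : covers g2 ε <;>
          by_cases a3 : covers g3 ε <;> by_cases a4 : covers g4 ε <;>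
          by_cases a5 : covers g5 ε <;>
          simp [covers_or, a1, a2, a3, a4, a5, BT.S2_isP hP]
      · refine ⟨BT.S2 c1 c2 c3 c4 c5,
          fun i => g1 i || g2 i || g3 i || g4 i || g5 i, fun ε => ?_⟩
        simp only [h1 ε, h2 ε, h3 ε, h4 ε, h5 ε]
        by_cases a1 : covers g1 ε <;> by_cases a2 : covers g2 ε <;>
          by_cases a3 : covers g3 ε <;> by_cases a4 : covers g4 ε <;>
          by_cases a5 : covers g5 ε <;>
          simp [covers_or, a1, a2, a3, a4, a5,
            BT.S2_zero_uv hP (Or.inl rfl), BT.S2_zero_uv hP (Or.inr rfl)]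
  | mach i hi r t b hp hq hu ihp ihq ihu =>
      obtain ⟨c1, g1, h1⟩ := ihp; obtain ⟨c2, g2, h2⟩ := ihq
      obtain ⟨c3, g3, h3⟩ := ihu
      refine ⟨mop T i r t b c1 c2 c3, fun i' => g1 i' || g2 i' || g3 i', fun ε => ?_⟩
      simp only [h1 ε, h2 ε, h3 ε]
      by_cases a1 : covers g1 ε <;> by_cases a2 : covers g2 ε <;>
        by_cases a3 : covers g3 ε <;>
        simp [covers_or, a1, a2, a3]
  | u1 i hi r t b hp hq hr' hs ihp ihq ihr' ihs =>
      obtain ⟨c1, g1, h1⟩ := ihp; obtain ⟨c2, g2, h2⟩ := ihq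
      obtain ⟨c3, g3, h3⟩ := ihr'; obtain ⟨c4, g4, h4⟩ := ihs
      refine ⟨U1op (mop T i r t b) c1 c2 c3 c4,
        fun i' => g1 i' || g2 i' || g3 i' || g4 i', fun ε => ?_⟩
      simp only [h1 ε, h2 ε, h3 ε, h4 ε]
      by_cases a1 : covers g1 ε <;> by_cases a2 : covers g2 ε <;>
        by_cases a3 : covers g3 ε <;> by_cases a4 : covers g4 ε <;>
        simp [covers_or, a1, a2, a3, a4]
  | u2 i hi r t b hp hq hr' hs ihp ihq ihr' ihs =>
      obtain ⟨c1, g1, h1⟩ := ihp; obtain ⟨c2, g2, h2⟩ := ihq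
      obtain ⟨c3, g3, h3⟩ := ihr'; obtain ⟨c4, g4, h4⟩ := ihs
      refine ⟨U2op (mop T i r t b) c1 c2 c3 c4,
        fun i' => g1 i' || g2 i' || g3 i' || g4 i', fun ε => ?_⟩
      simp only [h1 ε, h2 ε, h3 ε, h4 ε]
      by_cases a1 : covers g1 ε <;> by_cases a2 : covers g2 ε <;>
        by_cases a3 : covers g3 ε <;> by_cases a4 : covers g4 ε <;>
        simp [covers_or, a1, a2, a3, a4]

end Aux

/-- for each i ∈ {0,1,2}: (a) no unary polynomial of B(T) switches 0 and P_i;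
(b) there is no binary polynomial F and v ≠ 0 with F(0,0) = 0 and
F(P_i,0) = F(0,P_i) = F(P_i,P_i) = v. -/
theorem statement8 {k : ℕ} (hk : 0 < k) (T : TM k) (j : Fin 3) :
    (¬ ∃ F : BT k → BT k, UPolyB T F ∧ F BT.zero = BT.P j ∧ F (BT.P j) = BT.zero) ∧
    (¬ ∃ (F : BT k → BT k → BT k) (v : BT k), BPolyB T F ∧ v ≠ BT.zero ∧
      F BT.zero BT.zero = BT.zero ∧ F (BT.P j) BT.zero = v ∧ F BT.zero (BT.P j) = v ∧
      F (BT.P j) (BT.P j) = v) := by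
  constructor
  · rintro ⟨F, hF, h0, h1⟩
    obtain ⟨c, g, hg⟩ := good_of_poly j hF
    have hcovT : covers g (fun _ => true) := fun i _ => rfl
    have ht := hg (fun _ => true)
    have hf := hg (fun _ => false)
    simp only [] at ht hf
    rw [if_pos hcovT] at ht
    simp only [if_pos rfl, Bool.false_eq_true, if_false] at ht hf
    -- ht : F (BT.P j) = c
    have hc : c = BT.zero := ht.symm.trans h1
    subst hc
    rw [h0] at hf
    split_ifs at hf <;> exact absurd hf (by simp)
  · rintro ⟨F, v, hF, hv, h00, h10, h01, h11⟩
    obtain ⟨c, g, hg⟩ := good_of_poly j hF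
    have hcovT : covers g (fun _ => true) := fun i _ => rfl
    have e11 := hg (fun _ => true)
    have e10 := hg ![true, false]
    have e01 := hg ![false, true]
    have e00 := hg (fun _ => false)
    simp only [] at e11 e10 e01 e00
    rw [if_pos hcovT] at e11
    simp only [Matrix.cons_val_zero, Matrix.cons_val_one, Matrix.head_cons,
      if_pos rfl, Bool.false_eq_true, if_false] at e11 e10 e01 e00
    -- e11 : F (P j) (P j) = c, e10 : F (P j) 0 = ite _ c 0, etc.
    have hc : c = v := e11.symm.trans h11
    subst hc
    have hcov10 : covers g ![true, false] := by
      by_contra h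
      rw [if_neg h] at e10
      exact hv (h10.symm.trans e10)
    have hcov01 : covers g ![false, true] := by
      by_contra h
      rw [if_neg h] at e01
      exact hv (h01.symm.trans e01)
    have hcov00 : covers g (fun _ => false) := by
      intro i hi
      fin_cases i
      · have := hcov01 0 hi
        simpa using this
      · have := hcov10 1 hi
        simpa using this
    rw [if_pos hcov00, h00] at e00
    exact hv e00.symm

end Paper
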